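/- (Case p < 0.) Fix α ∈ (0,1] and a real p < 0. Assume v_i({g}) > 0 for every agent i and good g. Suppose Y : {1,…,n} → M is injective and minimizes the matching objective: for every injective Y' : {1,…,n} → M, Σ_i ( n · v_i({Y(i)}) + v_i(M \ H_i) )^p ≤ Σ_i ( n · v_i({Y'(i)}) + v_i(M \ H_i) )^p. Suppose Z = (Z_1,…,Z_n) is an allocation with v_i(Z_i) ≥ (α/(4(n+1))) · ( n · v_i({Y(i)}) + v_i(M \ H_i) ) for every i. Then for every allocation X* = (X*_1,…,X*_n) of pairwise disjoint nonempty subsets of M, Σ_i v_i(Z_i)^p ≤ (α/(4(n+1)))^p · Σ_i v_i(X*_i)^p, and consequently ( (1/n) Σ_i v_i(Z_i)^p )^{1/p} ≥ (α/(4(n+1))) · ( (1/n) Σ_i v_i(X*_i)^p )^{1/p}. -/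
import Mathlib

private lemma subadd_sum {G : Type*} [DecidableEq G] (v : Finset G → ℝ)
    (h0 : v ∅ = 0) (hsub : ∀ A B, v (A ∪ B) ≤ v A + v B) (S : Finset G) :
    v S ≤ ∑ g ∈ S, v {g} := by
  classical
  induction S using Finset.induction_on with
  | empty => simp [h0]
  | @insert a s hg ih =>
    rw [Finset.sum_insert hg, Finset.insert_eq]
    calc v ({a} ∪ s) ≤ v {a} + v s := hsub _ _
      _ ≤ v {a} + ∑ g ∈ s, v {g} := by linarith

/-- Case `p < 0`: If `Y` minimizes the matching objective
`Σ_i (n · v i {Y i} + v i (M \ H i))^p` and `Z` satisfies the lower bound of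
the key lemma, then `Σ_i v i (Z i)^p ≤ (α/(4(n+1)))^p · Σ_i v i (X* i)^p` and
hence the `p`-mean welfare of `Z` is at least `α/(4(n+1))` times that of any
allocation `X*` of pairwise disjoint nonempty subsets of `M`. -/
theorem pmean_welfare_approximation_neg_p
    {G : Type*} [DecidableEq G]
    (n : ℕ) (hn : 0 < n) (M : Finset G) (hm : n ≤ M.card)
    (v : Fin n → Finset G → ℝ)
    (hv0 : ∀ i A, 0 ≤ v i A)
    (hnorm : ∀ i, v i ∅ = 0)
    (hmono : ∀ i A B, A ⊆ B → v i A ≤ v i B)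
    (hsub : ∀ i A B, v i (A ∪ B) ≤ v i A + v i B)
    (hvpos : ∀ i (g : G), g ∈ M → 0 < v i {g})
    (α : ℝ) (hα0 : 0 < α) (hα1 : α ≤ 1)
    (p : ℝ) (hp : p < 0)
    (H : Fin n → Finset G)
    (hHM : ∀ i, H i ⊆ M) (hHcard : ∀ i, (H i).card = n)
    (hHtop : ∀ i, ∀ g ∈ H i, ∀ g' ∈ M \ H i, v i {g'} ≤ v i {g})
    (Y : Fin n → G) (hYM : ∀ i, Y i ∈ M) (hYinj : Function.Injective Y)
    (hYopt : ∀ Y' : Fin n → G, Function.Injective Y' → (∀ i, Y' i ∈ M) →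
      ∑ i, ((n : ℝ) * v i {Y i} + v i (M \ H i)) ^ p
        ≤ ∑ i, ((n : ℝ) * v i {Y' i} + v i (M \ H i)) ^ p)
    (Z : Fin n → Finset G)
    (hZM : ∀ i, Z i ⊆ M)
    (hZdisj : ∀ i j, i ≠ j → Disjoint (Z i) (Z j))
    (hZ : ∀ i, (α / (4 * ((n : ℝ) + 1))) *
        ((n : ℝ) * v i {Y i} + v i (M \ H i)) ≤ v i (Z i)) :
    ∀ Xs : Fin n → Finset G, (∀ i, Xs i ⊆ M) → (∀ i, (Xs i).Nonempty) →
      (∀ i j, i ≠ j → Disjoint (Xs i) (Xs j)) →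
      (∑ i, v i (Z i) ^ p ≤ (α / (4 * ((n : ℝ) + 1))) ^ p * ∑ i, v i (Xs i) ^ p)
      ∧ (α / (4 * ((n : ℝ) + 1))) *
            (((1 : ℝ) / n) * ∑ i, v i (Xs i) ^ p) ^ (1 / p)
          ≤ (((1 : ℝ) / n) * ∑ i, v i (Z i) ^ p) ^ (1 / p) := by
  intro Xs hXsM hXsNe hXsDisj
  set c : ℝ := α / (4 * ((n : ℝ) + 1)) with hc
  have hcpos : 0 < c := by positivity
  have hnR : (0 : ℝ) < n := by exact_mod_cast hn
  set W : Fin n → ℝ := fun i => (n : ℝ) * v i {Y i} + v i (M \ H i) with hWdef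
  have hW : ∀ i, 0 < W i := by
    intro i
    have h1 := hvpos i (Y i) (hYM i)
    have h2 := hv0 i (M \ H i)
    have : 0 < (n : ℝ) * v i {Y i} := by positivity
    simp only [hWdef]; linarith
  have hZpos : ∀ i, 0 < v i (Z i) := fun i =>
    lt_of_lt_of_le (by have := hW i; positivity) (hZ i)
  have hXpos : ∀ i, 0 < v i (Xs i) := by
    intro i
    obtain ⟨g, hg⟩ := hXsNe i
    exact lt_of_lt_of_le (hvpos i g (hXsM i hg))
      (hmono i {g} (Xs i) (Finset.singleton_subset_iff.mpr hg))
  -- construct Y'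
  have hchoice : ∀ i, ∃ g, g ∈ Xs i ∧ v i (Xs i ∩ H i) ≤ (n : ℝ) * v i {g} := by
    intro i
    by_cases hne : (Xs i ∩ H i).Nonempty
    · obtain ⟨g, hg, hmax⟩ := Finset.exists_max_image (Xs i ∩ H i) (fun g => v i {g}) hne
      have hgX : g ∈ Xs i := (Finset.mem_inter.mp hg).1
      refine ⟨g, hgX, ?_⟩
      have hcard : ((Xs i ∩ H i).card : ℝ) ≤ (n : ℝ) := by
        have := Finset.card_le_card (Finset.inter_subset_right : Xs i ∩ H i ⊆ H i)
        rw [hHcard i] at this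
        exact_mod_cast this
      calc v i (Xs i ∩ H i) ≤ ∑ g' ∈ Xs i ∩ H i, v i {g'} :=
            subadd_sum (v i) (hnorm i) (hsub i) _
        _ ≤ ∑ _g' ∈ Xs i ∩ H i, v i {g} := Finset.sum_le_sum fun g' hg' => hmax g' hg'
        _ = ((Xs i ∩ H i).card : ℝ) * v i {g} := by
            rw [Finset.sum_const, nsmul_eq_mul]
        _ ≤ (n : ℝ) * v i {g} :=
            mul_le_mul_of_nonneg_right hcard (hvpos i g (hXsM i hgX)).le
    · obtain ⟨g, hg⟩ := hXsNe i
      refine ⟨g, hg, ?_⟩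
      rw [Finset.not_nonempty_iff_eq_empty.mp hne, hnorm i]
      have := hvpos i g (hXsM i hg)
      positivity
  choose Y' hY'mem hY'bound using hchoice
  have hY'M : ∀ i, Y' i ∈ M := fun i => hXsM i (hY'mem i)
  have hY'inj : Function.Injective Y' := by
    intro i j hij
    by_contra hne
    exact (Finset.disjoint_left.mp (hXsDisj i j hne) (hY'mem i)) (hij ▸ hY'mem j)
  have hWX : ∀ i, v i (Xs i) ≤ (n : ℝ) * v i {Y' i} + v i (M \ H i) := by
    intro i
    have hcover : Xs i ⊆ (Xs i ∩ H i) ∪ (Xs i \ H i) := by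
      intro g hg
      by_cases h : g ∈ H i <;> simp [Finset.mem_union, Finset.mem_inter, Finset.mem_sdiff, hg, h]
    have h1 : v i (Xs i) ≤ v i (Xs i ∩ H i) + v i (Xs i \ H i) :=
      le_trans (hmono i _ _ hcover) (hsub i _ _)
    have h2 : v i (Xs i \ H i) ≤ v i (M \ H i) :=
      hmono i _ _ (Finset.sdiff_subset_sdiff (hXsM i) subset_rfl)
    linarith [hY'bound i]
  -- pointwise rpow inequalities
  have step1 : ∀ i, v i (Z i) ^ p ≤ c ^ p * (W i) ^ p := by
    intro i
    rw [← Real.mul_rpow hcpos.le (hW i).le]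
    exact Real.rpow_le_rpow_of_nonpos (by have := hW i; positivity) (hZ i) hp.le
  have step3 : ∀ i, ((n : ℝ) * v i {Y' i} + v i (M \ H i)) ^ p ≤ v i (Xs i) ^ p :=
    fun i => Real.rpow_le_rpow_of_nonpos (hXpos i) (hWX i) hp.le
  have hcp : 0 < c ^ p := Real.rpow_pos_of_pos hcpos p
  have main : ∑ i, v i (Z i) ^ p ≤ c ^ p * ∑ i, v i (Xs i) ^ p := by
    calc ∑ i, v i (Z i) ^ p ≤ ∑ i, c ^ p * (W i) ^ p :=
          Finset.sum_le_sum fun i _ => step1 i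
      _ = c ^ p * ∑ i, (W i) ^ p := by rw [Finset.mul_sum]
      _ ≤ c ^ p * ∑ i, ((n : ℝ) * v i {Y' i} + v i (M \ H i)) ^ p :=
          mul_le_mul_of_nonneg_left (hYopt Y' hY'inj hY'M) hcp.le
      _ ≤ c ^ p * ∑ i, v i (Xs i) ^ p :=
          mul_le_mul_of_nonneg_left (Finset.sum_le_sum fun i _ => step3 i) hcp.le
  refine ⟨main, ?_⟩
  have : Nonempty (Fin n) := Fin.pos_iff_nonempty.mp hn
  have huniv : (Finset.univ : Finset (Fin n)).Nonempty := Finset.univ_nonempty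
  have hsumZ : 0 < ∑ i, v i (Z i) ^ p :=
    Finset.sum_pos (fun i _ => Real.rpow_pos_of_pos (hZpos i) p) huniv
  have hsumX : 0 < ∑ i, v i (Xs i) ^ p :=
    Finset.sum_pos (fun i _ => Real.rpow_pos_of_pos (hXpos i) p) huniv
  have hmean : ((1 : ℝ) / n) * ∑ i, v i (Z i) ^ p
      ≤ c ^ p * (((1 : ℝ) / n) * ∑ i, v i (Xs i) ^ p) := by
    have h1n : (0 : ℝ) < 1 / n := by positivity
    calc ((1 : ℝ) / n) * ∑ i, v i (Z i) ^ p
        ≤ ((1 : ℝ) / n) * (c ^ p * ∑ i, v i (Xs i) ^ p) :=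
          mul_le_mul_of_nonneg_left main h1n.le
      _ = c ^ p * (((1 : ℝ) / n) * ∑ i, v i (Xs i) ^ p) := by ring
  have hmZ : 0 < ((1 : ℝ) / n) * ∑ i, v i (Z i) ^ p := by positivity
  have hmX : 0 < ((1 : ℝ) / n) * ∑ i, v i (Xs i) ^ p := by positivity
  have hpinv : 1 / p ≤ 0 := (one_div_neg.mpr hp).le
  have hfin := Real.rpow_le_rpow_of_nonpos hmZ hmean hpinv
  rw [Real.mul_rpow hcp.le hmX.le, ← Real.rpow_mul hcpos.le,
      mul_one_div_cancel hp.ne, Real.rpow_one] at hfin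
  exact hfin
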